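/- Let Ω ⊂ ℂⁿ be an open set, p > 0 a constant, and φ a measurable function on Ω which is locally bounded from above and such that {z ∈ Ω : φ(z) = -∞} has Lebesgue measure zero. Let P be a holomorphic cylinder such that Ω_P := {x ∈ Ω : x + P is compactly contained in Ω} is nonempty. Then for every x ∈ Ω_P, liminf_{z→x} B_{z+P, p}(z; e^{-φ}) ≥ lim_{s→1⁺} B_{x+sP, p}(x; e^{-φ}), where sP denotes the scaled cylinder {sz : z ∈ P}, the limit being taken over s > 1 with x + sP compactly contained in Ω (this limit exists since s ↦ B_{x+sP, p}(x; e^{-φ}) is nonincreasing in s). -/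

import Mathlib

open MeasureTheory Complex Filter Topology Matrix
open scoped ENNReal NNReal ComplexOrder Pointwise

noncomputable section

/-- `e^{-x}` for `x : EReal`, valued in `ℝ≥0∞`. -/
def expNeg (x : EReal) : ℝ≥0∞ :=
  if x = ⊥ then ⊤ else if x = ⊤ then 0 else ENNReal.ofReal (Real.exp (-x.toReal))

/-- Truncation of an extended real to `ℝ≥0∞`. -/
def erealToENN (x : EReal) : ℝ≥0∞ :=
  if x = ⊤ then ⊤ else ENNReal.ofReal x.toReal

/-- `log t` as an extended real (`⊥` for `t ≤ 0`). -/
def logE (t : ℝ) : EReal := if t ≤ 0 then ⊥ else ((Real.log t : ℝ) : EReal)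

/-- A holomorphic cylinder with parameters `r`, `s`: the image under a unitary matrix of
`𝔻_r × 𝔹_s^{n-1}` (the disc in one coordinate, the ball of radius `s` in the others). -/
def IsHolCylinder {n : ℕ} (P : Set (Fin n → ℂ)) (r s : ℝ) : Prop :=
  0 < r ∧ 0 < s ∧ ∃ A ∈ Matrix.unitaryGroup (Fin n) ℂ, ∃ i₀ : Fin n,
    P = (fun z => A.mulVec z) ''
      {z : Fin n → ℂ | ‖z i₀‖ < r ∧
        ∑ i ∈ Finset.univ.erase i₀, ‖z i‖ ^ 2 < s ^ 2}

/-- The "diameter" `𝔡` of a holomorphic cylinder with parameters `r`, `s` in `ℂⁿ`. -/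
def cylDiam (n : ℕ) (r s : ℝ) : ℝ :=
  Real.sqrt (r ^ 2 / 2 + ((n : ℝ) - 1) / n * s ^ 2)

/-- Plurisubharmonicity (allowing the value `-∞`) on a set `Ω`: upper semicontinuity on `Ω`
together with the sub-mean value inequality on every closed disc, in every complex line,
contained in `Ω`.  The circle average of the `EReal`-valued function is expressed through any
real upper bound `M` on the circle as `M - ⨍ (M - φ)`. -/
def PshOn {E : Type*} [NormedAddCommGroup E] [NormedSpace ℂ E] (φ : E → EReal)
    (Ω : Set E) : Prop :=
  UpperSemicontinuousOn φ Ω ∧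
  ∀ (x v : E) (R : ℝ), 0 < R → (∀ t : ℂ, ‖t‖ ≤ R → x + t • v ∈ Ω) →
    ∀ M : ℝ, (∀ θ : ℝ, φ (x + ((R : ℂ) * Complex.exp (θ * Complex.I)) • v) ≤ (M : EReal)) →
      φ x ≤ (M : EReal) -
        (((∫⁻ θ in Set.Ioc (0:ℝ) (2 * Real.pi),
            erealToENN ((M : EReal) - φ (x + ((R : ℂ) * Complex.exp (θ * Complex.I)) • v))) /
          ENNReal.ofReal (2 * Real.pi) : ℝ≥0∞) : EReal)

/-- A real-valued function is pluriharmonic on `Ω` if it is locally the real part of a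
holomorphic function. -/
def PluriharmonicOn {E : Type*} [NormedAddCommGroup E] [NormedSpace ℂ E] (φ : E → ℝ)
    (Ω : Set E) : Prop :=
  ∀ x ∈ Ω, ∃ U : Set E, IsOpen U ∧ x ∈ U ∧ U ⊆ Ω ∧
    ∃ g : E → ℂ, DifferentiableOn ℂ g U ∧ ∀ z ∈ U, φ z = (g z).re

/-- An `EReal`-valued function is pluriharmonic on `Ω` if it is locally the real part of a
holomorphic function. -/
def PluriharmonicEOn {E : Type*} [NormedAddCommGroup E] [NormedSpace ℂ E] (φ : E → EReal)
    (Ω : Set E) : Prop :=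
  ∀ x ∈ Ω, ∃ U : Set E, IsOpen U ∧ x ∈ U ∧ U ⊆ Ω ∧
    ∃ g : E → ℂ, DifferentiableOn ℂ g U ∧ ∀ z ∈ U, φ z = (((g z).re : ℝ) : EReal)

/-- `|v|_{h(z)}² = v* h(z) v`. -/
def hermNormSq {n r : ℕ} (h : (Fin n → ℂ) → Matrix (Fin r) (Fin r) ℂ)
    (z : Fin n → ℂ) (v : Fin r → ℂ) : ℝ :=
  (dotProduct (star v) ((h z).mulVec v)).re

/-- Wirtinger derivative `∂g/∂z_i` (for real-differentiable `g`). -/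
def wirtD {n : ℕ} (i : Fin n) (g : (Fin n → ℂ) → ℂ) (x : Fin n → ℂ) : ℂ :=
  (1 / 2) * (fderiv ℝ g x (Pi.single i 1) - Complex.I * fderiv ℝ g x (Pi.single i Complex.I))

/-- Wirtinger derivative `∂g/∂z̄_i` (for real-differentiable `g`). -/
def wirtDbar {n : ℕ} (i : Fin n) (g : (Fin n → ℂ) → ℂ) (x : Fin n → ℂ) : ℂ :=
  (1 / 2) * (fderiv ℝ g x (Pi.single i 1) + Complex.I * fderiv ℝ g x (Pi.single i Complex.I))

/-- The components `R_{i j̄ α β̄}` of the Chern curvature of the metric `h`: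
`R_{i j̄ α β̄} = -∂²h_{αβ̄}/∂z_i∂z̄_j + Σ h^{α'β̄'} (∂h_{αβ̄'}/∂z_i)(∂h_{α'β̄}/∂z̄_j)`. -/
def chernR {n r : ℕ} (h : (Fin n → ℂ) → Matrix (Fin r) (Fin r) ℂ)
    (i j : Fin n) (α β : Fin r) (x : Fin n → ℂ) : ℂ :=
  - wirtD i (fun y => wirtDbar j (fun w => h w α β) y) x
    + ∑ α' : Fin r, ∑ β' : Fin r,
        (h x)⁻¹ α' β' * wirtD i (fun w => h w α β') x * wirtDbar j (fun w => h w α' β) x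

/-- A smooth Hermitian metric on the trivial bundle `Ω × ℂ^r`: a smooth map from `Ω` to
positive definite Hermitian matrices. -/
def SmoothMetricOn {n r : ℕ} (h : (Fin n → ℂ) → Matrix (Fin r) (Fin r) ℂ)
    (Ω : Set (Fin n → ℂ)) : Prop :=
  (∀ α β : Fin r, ContDiffOn ℝ (⊤ : ℕ∞) (fun z => h z α β) Ω) ∧ ∀ z ∈ Ω, (h z).PosDef

/-- `iΘ_h ≥_Grif c ω ⊗ Id_E` at `x`. -/
def GriffithsGEAt {n r : ℕ} (h : (Fin n → ℂ) → Matrix (Fin r) (Fin r) ℂ) (c : ℝ)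
    (x : Fin n → ℂ) : Prop :=
  ∀ (a : Fin n → ℂ) (v : Fin r → ℂ),
    c * (∑ i, ‖a i‖ ^ 2) * hermNormSq h x v ≤
      (∑ i, ∑ j, ∑ α, ∑ β,
        chernR h i j α β x * a i * (starRingEnd ℂ) (a j) * v α * (starRingEnd ℂ) (v β)).re

/-- The weighted `p`-Bergman kernel `B_{Ω,p}(x; w)` (with weight `w`, valued in `ℝ≥0∞`):
the supremum of `|f(x)|^p` over holomorphic `f` on `Ω` with `∫_Ω |f|^p w dλ ≤ 1`. -/
def pBergman {E : Type*} [NormedAddCommGroup E] [NormedSpace ℂ E] [MeasureSpace E]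
    (p : ℝ) (Ω : Set E) (w : E → ℝ≥0∞) (x : E) : ℝ≥0∞ :=
  ⨆ (f : E → ℂ) (_ : DifferentiableOn ℂ f Ω)
      (_ : (∫⁻ z in Ω, ENNReal.ofReal (‖f z‖ ^ p) * w z) ≤ 1),
    ENNReal.ofReal (‖f x‖ ^ p)

/-- `inf { ∫_S |f|^p w dλ : f holomorphic on S, f(x) = 1 }` (valued in `ℝ≥0∞`). -/
def extInf {E : Type*} [NormedAddCommGroup E] [NormedSpace ℂ E] [MeasureSpace E]
    (p : ℝ) (S : Set E) (w : E → ℝ≥0∞) (x : E) : ℝ≥0∞ :=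
  ⨅ (f : E → ℂ) (_ : DifferentiableOn ℂ f S) (_ : f x = 1),
    ∫⁻ z in S, ENNReal.ofReal (‖f z‖ ^ p) * w z

/-- `inf { ∫_S |f|_h^p dλ : f holomorphic section on S, f(x) = v }` (valued in `ℝ≥0∞`). -/
def extInfVec {n r : ℕ} (p : ℝ) (S : Set (Fin n → ℂ))
    (h : (Fin n → ℂ) → Matrix (Fin r) (Fin r) ℂ) (v : Fin r → ℂ) (x : Fin n → ℂ) : ℝ≥0∞ :=
  ⨅ (f : (Fin n → ℂ) → (Fin r → ℂ)) (_ : DifferentiableOn ℂ f S) (_ : f x = v),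
    ∫⁻ z in S, ENNReal.ofReal (Real.sqrt (hermNormSq h z (f z)) ^ p)

end

lemma IsHolCylinder.basic {n : ℕ} {P : Set (Fin n → ℂ)} {r s : ℝ}
    (hP : IsHolCylinder P r s) : IsOpen P ∧ Convex ℝ P ∧ (0 : Fin n → ℂ) ∈ P := by
  obtain ⟨hr, hs, A, hA, i₀, hPeq⟩ := hP
  have hst : star A * A = 1 := Matrix.mem_unitaryGroup_iff'.mp hA
  have hts : A * star A = 1 := Matrix.mem_unitaryGroup_iff.mp hA
  set Q : Set (Fin n → ℂ) := {z | ‖z i₀‖ < r ∧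
      ∑ i ∈ Finset.univ.erase i₀, ‖z i‖ ^ 2 < s ^ 2} with hQ
  have hPQ : P = (fun z => (star A).mulVec z) ⁻¹' Q := by
    rw [hPeq]; ext w
    constructor
    · rintro ⟨q, hq, rfl⟩
      simpa [Matrix.mulVec_mulVec, hst, Matrix.one_mulVec] using hq
    · intro hw
      exact ⟨(star A).mulVec w, hw, by simp [Matrix.mulVec_mulVec, hts, Matrix.one_mulVec]⟩
  have hc : Continuous fun z : Fin n → ℂ => (star A).mulVec z := by
    have := LinearMap.continuous_of_finiteDimensional (Matrix.mulVecLin (star A))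
    exact this
  have hQopen : IsOpen Q := by
    have h1 : Continuous fun z : Fin n → ℂ => ‖z i₀‖ :=
      continuous_norm.comp (continuous_apply i₀)
    have h2 : Continuous fun z : Fin n → ℂ =>
        ∑ i ∈ Finset.univ.erase i₀, ‖z i‖ ^ 2 := by
      apply continuous_finset_sum
      intro i _
      exact (continuous_norm.comp (continuous_apply i)).pow 2
    rw [hQ, Set.setOf_and]
    exact (isOpen_lt h1 continuous_const).inter (isOpen_lt h2 continuous_const)
  -- linear map into Euclidean space killing coordinate i₀
  let L : (Fin n → ℂ) →ₗ[ℝ] EuclideanSpace ℂ (Fin n) :=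
    { toFun := fun z => WithLp.toLp 2 (fun i => if i = i₀ then 0 else z i)
      map_add' := by
        intro a b; ext i; by_cases h : i = i₀ <;> simp [h]
      map_smul' := by
        intro c a; ext i; by_cases h : i = i₀ <;> simp [h] }
  have hQ2 : {z : Fin n → ℂ | ∑ i ∈ Finset.univ.erase i₀, ‖z i‖ ^ 2 < s ^ 2}
      = L ⁻¹' Metric.ball 0 s := by
    ext z
    have hsum : ∑ i, ‖(L z) i‖ ^ 2 = ∑ i ∈ Finset.univ.erase i₀, ‖z i‖ ^ 2 := by
      rw [← Finset.sum_erase_add _ _ (Finset.mem_univ i₀)]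
      have h0 : ‖(L z) i₀‖ ^ 2 = 0 := by simp [L]
      rw [h0, add_zero]
      refine Finset.sum_congr rfl fun i hi => ?_
      simp [L, Finset.ne_of_mem_erase hi]
    simp only [Set.mem_setOf_eq, Set.mem_preimage, Metric.mem_ball, dist_zero_right,
      EuclideanSpace.norm_eq]
    rw [← Real.sqrt_lt' hs, hsum]
  have hQconv : Convex ℝ Q := by
    rw [hQ, Set.setOf_and]
    apply Convex.inter
    · have heq : {z : Fin n → ℂ | ‖z i₀‖ < r}
          = ((LinearMap.proj i₀ : (Fin n → ℂ) →ₗ[ℂ] ℂ).restrictScalars ℝ) ⁻¹'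
            Metric.ball (0 : ℂ) r := by
        ext z; simp [Complex.dist_eq]
      rw [heq]
      exact (convex_ball 0 r).linear_preimage _
    · rw [hQ2]
      exact (convex_ball 0 s).linear_preimage L
  have hfun : ⇑((Matrix.mulVecLin (star A)).restrictScalars ℝ)
      = fun z : Fin n → ℂ => (star A).mulVec z := by
    funext z; simp
  refine ⟨?_, ?_, ?_⟩
  · rw [hPQ]; exact hQopen.preimage hc
  · rw [hPQ]
    have := hQconv.linear_preimage ((Matrix.mulVecLin (star A)).restrictScalars ℝ)
    rwa [hfun] at this
  · rw [hPQ]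
    simp only [Set.mem_preimage, Matrix.mulVec_zero]
    exact ⟨by simpa using hr, by simpa using pow_pos hs 2⟩

/-- Proposition A.2 (ii): a lower bound for the liminf of
`z ↦ B_{z+P,p}(z; e^{-φ})` at `x ∈ Ω_P` by `lim_{s→1⁺} B_{x+sP,p}(x; e^{-φ})`; since
`s ↦ B_{x+sP,p}(x)` is nonincreasing, this (monotone) limit is the supremum over `s > 1`. -/
theorem pBergman_liminf_ge {n : ℕ}
    (Ω : Set (Fin n → ℂ)) (hΩ : IsOpen Ω) (p : ℝ) (hp : 0 < p)
    (φ : (Fin n → ℂ) → EReal) (hmeas : Measurable φ)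
    (hnt : ∀ z ∈ Ω, φ z ≠ ⊤)
    (hbd : ∀ x ∈ Ω, ∃ U ∈ 𝓝 x, ∃ M : ℝ, ∀ z ∈ U ∩ Ω, φ z ≤ (M : EReal))
    (hnull : volume {z | z ∈ Ω ∧ φ z = ⊥} = 0)
    (P : Set (Fin n → ℂ)) (r s : ℝ) (hP : IsHolCylinder P r s)
    (hne : {x : Fin n → ℂ | closure ((x + ·) '' P) ⊆ Ω}.Nonempty)
    (x : Fin n → ℂ) (hx : x ∈ {x : Fin n → ℂ | closure ((x + ·) '' P) ⊆ Ω}) :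
    (⨆ (t : ℝ) (_ : 1 < t) (_ : closure ((x + ·) '' (t • P)) ⊆ Ω),
        pBergman p ((x + ·) '' (t • P)) (fun z => expNeg (φ z)) x) ≤
      Filter.liminf (fun z => pBergman p ((z + ·) '' P) (fun w => expNeg (φ w)) z)
        (𝓝[{y : Fin n → ℂ | closure ((y + ·) '' P) ⊆ Ω}] x) := by

  refine iSup_le fun t => iSup_le fun ht => iSup_le fun _ => ?_
  obtain ⟨hPopen, hPconv, h0P⟩ := hP.basic
  set S : Set (Fin n → ℂ) := {y : Fin n → ℂ | closure ((y + ·) '' P) ⊆ Ω} with hS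
  set U : Set (Fin n → ℂ) := (x + ·) '' (t • P) with hU
  have ht0 : (0 : ℝ) < t - 1 := by linarith
  have hUopen : IsOpen U := (Homeomorph.addLeft x).isOpenMap _ (hPopen.smul₀ (by linarith : t ≠ 0))
  have hxU : x ∈ U := ⟨0, by simpa using Set.smul_mem_smul_set (a := t) h0P, by simp⟩
  obtain ⟨ε, hε, hball⟩ := Metric.isOpen_iff.mp hPopen 0 h0P
  haveI : (𝓝[S] x).NeBot := nhdsWithin_neBot_of_mem hx
  simp only [pBergman]
  refine iSup_le fun f => iSup_le fun hdf => iSup_le fun hint => ?_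
  -- continuity of the pointwise evaluation at x
  have hfc : ContinuousAt f x := hdf.continuousOn.continuousAt (hUopen.mem_nhds hxU)
  have hcont : ContinuousAt (fun z => ENNReal.ofReal (‖f z‖ ^ p)) x := by
    refine ENNReal.continuous_ofReal.continuousAt.comp ?_
    exact (Real.continuousAt_rpow_const _ _ (Or.inr hp.le)).comp
      (continuous_norm.continuousAt.comp hfc)
  have htend : Tendsto (fun z => ENNReal.ofReal (‖f z‖ ^ p)) (𝓝[S] x)
      (𝓝 (ENNReal.ofReal (‖f x‖ ^ p))) :=
    hcont.tendsto.mono_left nhdsWithin_le_nhds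
  -- key inclusion for z close to x
  have hsub : ∀ z : Fin n → ℂ, dist z x < (t - 1) * ε → ((z + ·) '' P) ⊆ U := by
    intro z hz
    rintro _ ⟨w, hw, rfl⟩
    have hv : z - x ∈ (t - 1) • P := by
      refine ⟨(t - 1)⁻¹ • (z - x), hball ?_, ?_⟩
      · rw [Metric.mem_ball, dist_zero_right, norm_smul, Real.norm_eq_abs,
          abs_of_pos (inv_pos.mpr ht0)]
        have hn : ‖z - x‖ < (t - 1) * ε := by rwa [← dist_eq_norm]
        calc (t - 1)⁻¹ * ‖z - x‖ < (t - 1)⁻¹ * ((t - 1) * ε) := by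
              exact mul_lt_mul_of_pos_left hn (inv_pos.mpr ht0)
          _ = ε := by field_simp
      · show (t - 1) • ((t - 1)⁻¹ • (z - x)) = z - x
        rw [smul_smul, mul_inv_cancel₀ (ne_of_gt ht0), one_smul]
    have hmem : (z - x) + w ∈ t • P := by
      have hsmul : t • P = (t - 1) • P + P := by
        have h1 : ((t - 1) + 1) • P = (t - 1) • P + (1 : ℝ) • P :=
          hPconv.add_smul ht0.le zero_le_one
        rw [sub_add_cancel] at h1
        rw [h1, one_smul]
      rw [hsmul]
      exact Set.add_mem_add hv hw
    exact ⟨(z - x) + w, hmem, by abel⟩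
  have hev : ∀ᶠ z in 𝓝[S] x, ENNReal.ofReal (‖f z‖ ^ p) ≤
      pBergman p ((z + ·) '' P) (fun w => expNeg (φ w)) z := by
    have hballm : Metric.ball x ((t - 1) * ε) ∈ 𝓝 x :=
      Metric.ball_mem_nhds x (by positivity)
    filter_upwards [nhdsWithin_le_nhds hballm] with z hz
    have hsub' := hsub z hz
    have hdf' : DifferentiableOn ℂ f ((z + ·) '' P) := hdf.mono hsub'
    have hint' : (∫⁻ w in (z + ·) '' P,
        ENNReal.ofReal (‖f w‖ ^ p) * expNeg (φ w)) ≤ 1 :=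
      le_trans (lintegral_mono_set hsub') hint
    exact le_iSup_of_le f (le_iSup_of_le hdf' (le_iSup_of_le hint' le_rfl))
  calc ENNReal.ofReal (‖f x‖ ^ p)
      = Filter.liminf (fun z => ENNReal.ofReal (‖f z‖ ^ p)) (𝓝[S] x) :=
        htend.liminf_eq.symm
    _ ≤ _ := Filter.liminf_le_liminf hev
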